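/- arXiv:2507.23254 — 4 statements merged into one kernel-verified Lean document; each statement's English description precedes it below -/
import Mathlib

section
/- For a real number x with 0 ≤ x < 1 and nonnegative integers k, k', the sum over n ≥ max(k,k') of n!·xⁿ/((n−k)!·(n−k')!) equals e^x · Σ_{i=0}^{min(k,k')} k!·k'!·x^{k+k'−i} / (i!·(k−i)!·(k'−i)!). -/
/-!
Since `n! / ((n - k)! (n - k')!) = k! k'! · C(n, k) C(n, k') / n!` for `n ≥ max k k'`, and the
right side vanishes for smaller `n`, the series is `k! k'! ∑ₙ C(n, k) C(n, k') xⁿ / n!`.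
Vandermonde's identity gives `C(n, k) C(n, k') = ∑ᵢ C(k, i) C(k + k' - i, k) C(n, k + k' - i)`,
and `∑ₙ C(n, s) xⁿ / n! = xˢ eˣ / s!`, so the series is a finite combination of `xˢ eˣ`.
-/

open Finset Nat

theorem hasSum_nat_add_iff_of_eq_zero {G : Type*} [AddCommGroup G] [TopologicalSpace G]
    [IsTopologicalAddGroup G] {f : ℕ → G} {s : ℕ} {a : G} (hf : ∀ n < s, f n = 0) :
    HasSum (fun n => f (n + s)) a ↔ HasSum f a := by
  have h := hasSum_nat_add_iff' (f := f) (g := a) s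
  rwa [sum_eq_zero fun n hn => hf n (mem_range.1 hn), sub_zero] at h

theorem Nat.choose_mul_choose_eq_sum_antidiagonal (n a b : ℕ) :
    n.choose a * n.choose b =
      ∑ p ∈ antidiagonal b, a.choose p.1 * ((a + p.2).choose a * n.choose (a + p.2)) := by
  rcases lt_or_ge n a with h | h
  · simp [choose_eq_zero_of_lt h, choose_eq_zero_of_lt (h.trans_le (le_add_right a _))]
  obtain ⟨m, rfl⟩ := exists_add_of_le h
  rw [add_choose_eq a m b, mul_sum]
  refine sum_congr rfl fun p _ => ?_
  have := choose_mul (n := a + m) (k := a + p.2) (s := a) (le_add_right a _)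
  rw [Nat.add_sub_cancel_left, Nat.add_sub_cancel_left] at this
  rw [mul_comm ((a + p.2).choose a), this]
  ring

theorem Nat.choose_mul_choose_eq_sum_range (n a b : ℕ) :
    n.choose a * n.choose b =
      ∑ i ∈ range (min a b + 1), a.choose i * ((a + b - i).choose a * n.choose (a + b - i)) := by
  rw [choose_mul_choose_eq_sum_antidiagonal, Nat.sum_antidiagonal_eq_sum_range_succ_mk]
  refine (sum_subset (range_subset_range.2 (by omega)) fun i hi hi' => ?_).symm.trans
    (sum_congr rfl fun i hi => ?_)
  · simp only [mem_range] at hi hi'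
    rw [choose_eq_zero_of_lt (by omega), zero_mul]
  · simp only [mem_range] at hi
    rw [Nat.add_sub_assoc (by omega)]

theorem Real.hasSum_choose_mul_pow_div_factorial (x : ℝ) (s : ℕ) :
    HasSum (fun n => (n.choose s : ℝ) * x ^ n / n !) (x ^ s / s ! * Real.exp x) := by
  rw [← hasSum_nat_add_iff_of_eq_zero (s := s) fun n hn => by simp [choose_eq_zero_of_lt hn]]
  have := (NormedSpace.expSeries_div_hasSum_exp x).mul_left (x ^ s / s !)
  rw [← Real.exp_eq_exp_ℝ] at this
  refine this.congr_fun fun n => ?_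
  have h := choose_mul_factorial_mul_factorial (le_add_left s n)
  rw [Nat.add_sub_cancel] at h
  have hc : ((n + s).choose s : ℝ) ≠ 0 := Nat.cast_ne_zero.2 (choose_pos (le_add_left s n)).ne'
  rw [← h]
  push_cast
  field_simp
  ring

theorem Nat.choose_mul_choose_mul_factorial_mul_factorial_mul_factorial {a b i : ℕ} (ha : i ≤ a)
    (hb : i ≤ b) :
    a.choose i * (a + b - i).choose a * (i ! * (a - i)! * (b - i)!) = (a + b - i)! := by
  have hi := choose_mul_factorial_mul_factorial ha
  have ha' := choose_mul_factorial_mul_factorial (n := a + b - i) (k := a) (by omega)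
  rw [show a + b - i - a = b - i by omega] at ha'
  rw [← ha', ← hi]
  ring

theorem Real.hasSum_choose_mul_choose_mul_pow_div_factorial (x : ℝ) (k k' : ℕ) :
    HasSum (fun n => (n.choose k * n.choose k' : ℝ) * x ^ n / n !)
      (Real.exp x * ∑ i ∈ range (min k k' + 1),
        x ^ (k + k' - i) / (i ! * (k - i)! * (k' - i)! : ℝ)) := by
  have h := hasSum_sum fun i (_ : i ∈ range (min k k' + 1)) =>
    (hasSum_choose_mul_pow_div_factorial x (k + k' - i)).mul_left
      (k.choose i * (k + k' - i).choose k : ℝ)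
  have hval : Real.exp x * ∑ i ∈ range (min k k' + 1),
      x ^ (k + k' - i) / (i ! * (k - i)! * (k' - i)! : ℝ) =
      ∑ i ∈ range (min k k' + 1),
        (k.choose i * (k + k' - i).choose k : ℝ) *
          (x ^ (k + k' - i) / (k + k' - i)! * Real.exp x) := by
    rw [mul_sum]
    refine sum_congr rfl fun i hi => ?_
    rw [mem_range] at hi
    have h₁ : (k.choose i : ℝ) ≠ 0 := Nat.cast_ne_zero.2 (choose_pos (by omega)).ne'
    have h₂ : ((k + k' - i).choose k : ℝ) ≠ 0 := Nat.cast_ne_zero.2 (choose_pos (by omega)).ne'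
    rw [← choose_mul_choose_mul_factorial_mul_factorial_mul_factorial (a := k) (b := k')
      (by omega) (by omega)]
    push_cast
    field_simp
  rw [hval]
  refine h.congr_fun fun n => ?_
  rw [← Nat.cast_mul, choose_mul_choose_eq_sum_range, Nat.cast_sum, sum_mul, sum_div]
  refine sum_congr rfl fun i _ => ?_
  push_cast
  ring

theorem Nat.cast_factorial_div_factorial_sub_mul_factorial_sub {n k k' : ℕ} (hk : k ≤ n)
    (hk' : k' ≤ n) :
    (n ! : ℝ) / ((n - k)! * (n - k')!) = k ! * k' ! * (n.choose k * n.choose k' / n !) := by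
  have h := choose_mul_factorial_mul_factorial hk
  have h' := choose_mul_factorial_mul_factorial hk'
  field_simp
  norm_cast
  rw [sq]
  nth_rw 1 [← h]
  rw [← h']
  ring

theorem stmt_0_general (x : ℝ) (k k' : ℕ) :
    ∑' n : ℕ, ((n + max k k').factorial : ℝ) * x ^ (n + max k k') /
      (((n + max k k' - k).factorial : ℝ) * ((n + max k k' - k').factorial : ℝ)) =
    Real.exp x * ∑ i ∈ Finset.range (min k k' + 1),
      (k.factorial : ℝ) * (k'.factorial : ℝ) * x ^ (k + k' - i) /
        ((i.factorial : ℝ) * ((k - i).factorial : ℝ) * ((k' - i).factorial : ℝ)) := by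
  have hvanish : ∀ n < max k k', (n.choose k * n.choose k' : ℝ) * x ^ n / n ! = 0 := fun n hn => by
    rcases lt_max_iff.1 hn with h | h <;> simp [choose_eq_zero_of_lt h]
  have hseries := ((hasSum_nat_add_iff_of_eq_zero hvanish).2
    (Real.hasSum_choose_mul_choose_mul_pow_div_factorial x k k')).mul_left (k ! * k' ! : ℝ)
  refine (hseries.congr_fun fun n => ?_).tsum_eq.trans ?_
  · rw [mul_div_right_comm, Nat.cast_factorial_div_factorial_sub_mul_factorial_sub
      (by omega) (by omega)]
    ring
  · rw [mul_left_comm, mul_sum]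
    simp only [mul_div_assoc]

theorem stmt_0 (x : ℝ) (hx0 : 0 ≤ x) (hx1 : x < 1) (k k' : ℕ) :
    ∑' n : ℕ, ((n + max k k').factorial : ℝ) * x ^ (n + max k k') /
      (((n + max k k' - k).factorial : ℝ) * ((n + max k k' - k').factorial : ℝ)) =
    Real.exp x * ∑ i ∈ Finset.range (min k k' + 1),
      (k.factorial : ℝ) * (k'.factorial : ℝ) * x ^ (k + k' - i) /
        ((i.factorial : ℝ) * ((k - i).factorial : ℝ) * ((k' - i).factorial : ℝ)) :=
  stmt_0_general x k k'
end

section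
/- For η ∈ (0,1] and a complex number δ, define the matrix element M(n,n') = e^{−η|δ|²}·√(n!·n'!)·η^{n+n'}·δⁿ·(δ̄)^{n'}·Σ_{i=0}^{min(n,n')} (1−η)^i / (i!·(n−i)!·(n'−i)!·(η|δ|)^{2i}). Then for all n, the diagonal element satisfies 0 ≤ M(n,n) ≤ 1 (assuming δ ≠ 0). -/
/-!
Since `n!/(i!(n-i)!²) = C(n,i)/(n-i)!`, the diagonal element equals
`e^{-y} ∑ᵢ C(n,i) (1-η)^i η^(n-i) · y^(n-i)/(n-i)!` with `y = η|δ|²`: a binomial mixture of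
Poisson weights. Bounding each Poisson weight `y^k/k!` by `e^y` leaves `e^{-y} e^y (1-η+η)^n = 1`.
-/

open Finset Nat Real

/-- The diagonal Fock-basis entry `M(n,n)` of the no-click POVM element, with `r = |δ|`. -/
noncomputable def noClickProb (η r : ℝ) (n : ℕ) : ℝ :=
  exp (-η * r ^ 2) * (n ! : ℝ) * (η * r) ^ (2 * n) *
    ∑ i ∈ range (n + 1), (1 - η) ^ i / ((i ! : ℝ) * ((n - i)! : ℝ) ^ 2 * (η * r) ^ (2 * i))

lemma noClickProb_nonneg {η : ℝ} (hη : η ≤ 1) (r : ℝ) (n : ℕ) : 0 ≤ noClickProb η r n := by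
  have h1η : 0 ≤ 1 - η := sub_nonneg.mpr hη
  have hpow (k : ℕ) : 0 ≤ (η * r) ^ (2 * k) := (even_two_mul k).pow_nonneg _
  have hsum := sum_nonneg fun i (_ : i ∈ range (n + 1)) =>
    div_nonneg (pow_nonneg h1η i) (mul_nonneg (by positivity :
      0 ≤ (i ! : ℝ) * ((n - i)! : ℝ) ^ 2) (hpow i))
  have := hpow n
  unfold noClickProb
  positivity

lemma factorial_mul_pow_mul_div_eq_choose {x : ℝ} (hx : x ≠ 0) {n i : ℕ} (hi : i ≤ n) (c : ℝ) :
    (n ! : ℝ) * x ^ (2 * n) * (c / ((i ! : ℝ) * ((n - i)! : ℝ) ^ 2 * x ^ (2 * i))) =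
      n.choose i * c * (x ^ 2) ^ (n - i) / ((n - i)! : ℝ) := by
  have hfact : (n.choose i : ℝ) * i ! * (n - i)! = n ! := by
    exact_mod_cast choose_mul_factorial_mul_factorial hi
  have hpow : x ^ (2 * n) = x ^ (2 * i) * (x ^ 2) ^ (n - i) := by
    rw [← pow_mul, ← pow_add]
    congr 1
    omega
  rw [hpow, ← hfact]
  field_simp

lemma noClickProb_eq_sum {η r : ℝ} (hη : η ≠ 0) (hr : r ≠ 0) (n : ℕ) :
    noClickProb η r n = exp (-(η * r ^ 2)) *
      ∑ i ∈ range (n + 1), n.choose i * (1 - η) ^ i * (η * (η * r ^ 2)) ^ (n - i) / ((n - i)! : ℝ) := by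
  rw [noClickProb, mul_assoc, mul_assoc, ← mul_assoc (n ! : ℝ), mul_sum, neg_mul]
  congr 1
  refine sum_congr rfl fun i hi => ?_
  rw [factorial_mul_pow_mul_div_eq_choose (mul_ne_zero hη hr) (mem_range_succ_iff.mp hi)]
  ring

lemma sum_choose_mul_pow_mul_pow_div_factorial_le_exp {p q y : ℝ} (hp : 0 ≤ p) (hq : 0 ≤ q)
    (hpq : q + p = 1) (hy : 0 ≤ y) (n : ℕ) :
    ∑ i ∈ range (n + 1), n.choose i * q ^ i * (p * y) ^ (n - i) / ((n - i)! : ℝ) ≤ exp y :=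
  calc ∑ i ∈ range (n + 1), n.choose i * q ^ i * (p * y) ^ (n - i) / ((n - i)! : ℝ)
      = ∑ i ∈ range (n + 1), q ^ i * p ^ (n - i) * n.choose i * (y ^ (n - i) / (n - i)!) :=
        sum_congr rfl fun i _ => by ring
    _ ≤ ∑ i ∈ range (n + 1), q ^ i * p ^ (n - i) * n.choose i * exp y :=
        sum_le_sum fun i _ => by gcongr; exact pow_div_factorial_le_exp _ hy _
    _ = exp y := by rw [← sum_mul, ← add_pow, hpq, one_pow, one_mul]

lemma noClickProb_le_one {η : ℝ} (hη0 : 0 < η) (hη1 : η ≤ 1) {r : ℝ} (hr : r ≠ 0) (n : ℕ) :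
    noClickProb η r n ≤ 1 := by
  rw [noClickProb_eq_sum hη0.ne' hr]
  calc _ ≤ exp (-(η * r ^ 2)) * exp (η * r ^ 2) := by
        gcongr
        exact sum_choose_mul_pow_mul_pow_div_factorial_le_exp hη0.le (by linarith) (by ring)
          (by positivity) n
    _ = 1 := by rw [← exp_add, neg_add_cancel, exp_zero]

theorem stmt_9 (η : ℝ) (hη0 : 0 < η) (hη1 : η ≤ 1) (δ : ℂ) (hδ : δ ≠ 0) (n : ℕ) :
    0 ≤ Real.exp (-η * ‖δ‖ ^ 2) * (n.factorial : ℝ) * (η * ‖δ‖) ^ (2 * n) *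
        ∑ i ∈ Finset.range (n + 1),
          (1 - η) ^ i / ((i.factorial : ℝ) * (((n - i).factorial : ℝ)) ^ 2 * (η * ‖δ‖) ^ (2 * i)) ∧
    Real.exp (-η * ‖δ‖ ^ 2) * (n.factorial : ℝ) * (η * ‖δ‖) ^ (2 * n) *
        ∑ i ∈ Finset.range (n + 1),
          (1 - η) ^ i / ((i.factorial : ℝ) * (((n - i).factorial : ℝ)) ^ 2 * (η * ‖δ‖) ^ (2 * i)) ≤ 1 :=
  ⟨noClickProb_nonneg hη1 ‖δ‖ n, noClickProb_le_one hη0 hη1 (norm_ne_zero_iff.mpr hδ) n⟩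
end

section
/- Let η ∈ (0,1] and C ∈ [0,1). Define A = 1 − C(1−η). Then the expression P(0|δ) = ((1−C)/2)·[ (2A² − ηA + (1−C)η²|δ|²)/A³ ]·exp(−η(1−C)|δ|²/A), as a function of t = |δ|² ≥ 0, satisfies 0 ≤ P ≤ 1 for all t ≥ 0. -/
theorem stmt_11 (η C : ℝ) (hη0 : 0 < η) (hη1 : η ≤ 1) (hC0 : 0 ≤ C) (hC1 : C < 1)
    (A : ℝ) (hA : A = 1 - C * (1 - η)) (t : ℝ) (ht : 0 ≤ t) :
    0 ≤ ((1 - C) / 2) * ((2 * A ^ 2 - η * A + (1 - C) * η ^ 2 * t) / A ^ 3) *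
        Real.exp (-η * (1 - C) * t / A) ∧
      ((1 - C) / 2) * ((2 * A ^ 2 - η * A + (1 - C) * η ^ 2 * t) / A ^ 3) *
        Real.exp (-η * (1 - C) * t / A) ≤ 1 := by
  have h1C : 0 < 1 - C := by linarith
  have hA0 : 0 < A := by nlinarith
  have hAη : η ≤ A := by nlinarith
  have hAC : 1 - C ≤ A := by nlinarith
  have hN : 0 ≤ 2 * A ^ 2 - η * A + (1 - C) * η ^ 2 * t := by
    nlinarith [mul_le_mul_of_nonneg_right hAη hA0.le,
      mul_nonneg (mul_nonneg h1C.le (sq_nonneg η)) ht]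
  have hK0 : 0 ≤ ((1 - C) / 2) * ((2 * A ^ 2 - η * A + (1 - C) * η ^ 2 * t) / A ^ 3) :=
    mul_nonneg (by linarith) (div_nonneg hN (by positivity))
  constructor
  · exact mul_nonneg hK0 (Real.exp_pos _).le
  · set x := η * (1 - C) * t / A with hx
    have hx0 : 0 ≤ x := by positivity
    have hexple : Real.exp (-η * (1 - C) * t / A) ≤ 1 / (1 + x) := by
      rw [show -η * (1 - C) * t / A = -x by rw [hx]; ring, Real.exp_neg, one_div]
      exact inv_anti₀ (by linarith) (by linarith [Real.add_one_le_exp x])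
    have hxA : x * A = η * (1 - C) * t := by
      rw [hx]; field_simp
    calc ((1 - C) / 2) * ((2 * A ^ 2 - η * A + (1 - C) * η ^ 2 * t) / A ^ 3) *
          Real.exp (-η * (1 - C) * t / A)
        ≤ ((1 - C) / 2) * ((2 * A ^ 2 - η * A + (1 - C) * η ^ 2 * t) / A ^ 3) * (1 / (1 + x)) :=
          mul_le_mul_of_nonneg_left hexple hK0
      _ ≤ 1 := by
          rw [mul_one_div, div_le_one (by linarith)]
          rw [div_mul_div_comm, div_le_iff₀ (by positivity)]
          have hrhs : (1 + x) * (2 * A ^ 3) = 2 * A ^ 3 + 2 * A ^ 2 * (x * A) := by ring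
          rw [hrhs, hxA]
          have hh1 : (1 - C) * (2 * A - η) ≤ A * (2 * A) :=
            mul_le_mul hAC (by linarith) (by linarith) hA0.le
          have hh2 : η * (1 - C) ≤ A * A :=
            mul_le_mul hAη hAC h1C.le hA0.le
          have h1 : A * ((1 - C) * (2 * A - η)) ≤ A * (A * (2 * A)) :=
            mul_le_mul_of_nonneg_left hh1 hA0.le
          have h2 : (η * (1 - C) * t) * (η * (1 - C)) ≤ (η * (1 - C) * t) * (A * A) :=
            mul_le_mul_of_nonneg_left hh2 (by positivity)
          nlinarith [h1, h2, mul_nonneg (mul_nonneg (mul_nonneg hη0.le h1C.le) ht) (sq_nonneg A)]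
end

section
/- For S ∈ [2, 2√2] and fixed q ∈ [0, 1/2], the function r(S) = 1 − h((1+√((S/2)²−1))/2) + h((1+√(1−q(1−q)(8−S²)))/2) is monotonically nondecreasing in S, where h is the binary entropy. -/
/-!
Substitute `y = 2 - S² / 4`, which decreases from `1` to `0` on `[2, 2√2]`. Then
`(S/2)² - 1 = 1 - y` and `q(1-q)(8 - S²) = c y` with `c = 4q(1-q) ∈ [0, 1]`, so
`r(S) = 1 - (g y - g (c y))` for `g x = h((1 + √(1 - x)) / 2)`. The difference `g y - g (c y)`
is nondecreasing in `y` because `g' ≥ 0` and `x g'(x)` is nondecreasing: its derivative is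
`(y g'(y) - c y g'(c y)) / y`. With `t = √(1 - x)` one has
`4 log 2 · x g'(x) = (1 - t²) L(t) / t`, `L(t) = log (1 + t) - log (1 - t)`, whose derivative
`(2t - (1 + t²) L(t)) / t²` is nonpositive since `L(t) ≥ 2t`, the first term of its power
series.
-/

noncomputable def binEnt (x : ℝ) : ℝ := -x * Real.logb 2 x - (1 - x) * Real.logb 2 (1 - x)

open Real Set

lemma monotoneOn_sub_comp_const_mul {g g' : ℝ → ℝ} {b c : ℝ}
    (hg : ContinuousOn g (Icc 0 b)) (hderiv : ∀ x ∈ Ioo 0 b, HasDerivAt g (g' x) x)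
    (hg' : ∀ x ∈ Ioo 0 b, 0 ≤ g' x) (hmono : MonotoneOn (fun x => x * g' x) (Ioo 0 b))
    (hc0 : 0 ≤ c) (hc1 : c ≤ 1) :
    MonotoneOn (fun y => g y - g (c * y)) (Icc 0 b) := by
  have hmaps : MapsTo (c * ·) (Icc 0 b) (Icc 0 b) := fun y ⟨hy0, hyb⟩ =>
    ⟨by positivity, by nlinarith⟩
  have hscaled : ∀ y ∈ Ioo 0 b, HasDerivAt (fun y => g (c * y)) (c * g' (c * y)) y := by
    intro y hy
    rcases hc0.eq_or_lt with rfl | hc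
    · simpa using hasDerivAt_const y (g 0)
    · have hcy : c * y ∈ Ioo 0 b := ⟨by nlinarith [hy.1], by nlinarith [hy.1, hy.2]⟩
      exact ((hderiv (c * y) hcy).comp y ((hasDerivAt_id y).const_mul c)).congr_deriv (by ring)
  refine monotoneOn_of_hasDerivWithinAt_nonneg (convex_Icc 0 b)
    (hg.sub (hg.comp (continuousOn_const.mul continuousOn_id) hmaps))
    (fun y hy => ((hderiv y (by simpa using hy)).sub
      (hscaled y (by simpa using hy))).hasDerivWithinAt) ?_
  rw [interior_Icc]
  intro y hy
  rcases hc0.eq_or_lt with rfl | hc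
  · simpa using hg' y hy
  · have hcy : c * y ∈ Ioo 0 b := ⟨by nlinarith [hy.1], by nlinarith [hy.1, hy.2]⟩
    have hscaled_le : c * y * g' (c * y) ≤ y * g' y := hmono hcy hy (by nlinarith [hy.1])
    nlinarith [hy.1]

lemma binEnt_eq_binEntropy_div (x : ℝ) : binEnt x = binEntropy x / log 2 := by
  simp only [binEnt, binEntropy, logb, log_inv]
  ring

lemma two_mul_le_log_one_add_sub_log_one_sub {t : ℝ} (h0 : 0 ≤ t) (h1 : t < 1) :
    2 * t ≤ log (1 + t) - log (1 - t) := by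
  have hsum := hasSum_log_sub_log_of_abs_lt_one (abs_lt.2 ⟨by linarith, h1⟩)
  simpa using le_hasSum hsum 0 fun k _ => by positivity

lemma hasDerivAt_log_one_add_sub_log_one_sub {t : ℝ} (h0 : -1 < t) (h1 : t < 1) :
    HasDerivAt (fun t => log (1 + t) - log (1 - t)) (2 / (1 - t ^ 2)) t := by
  have hadd : (1 : ℝ) + t ≠ 0 := by linarith
  have hsub : (1 : ℝ) - t ≠ 0 := by linarith
  refine ((((hasDerivAt_id t).const_add 1).log hadd).sub
    (((hasDerivAt_id t).const_sub 1).log hsub)).congr_deriv ?_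
  have hsq : 1 - t ^ 2 ≠ 0 := by nlinarith
  simp only [id]
  field_simp
  ring

lemma antitoneOn_one_sub_sq_mul_log_div :
    AntitoneOn (fun t => (1 - t ^ 2) * (log (1 + t) - log (1 - t)) / t) (Ioo 0 1) := by
  have hderiv : ∀ t ∈ Ioo (0 : ℝ) 1, HasDerivAt
      (fun t => (1 - t ^ 2) * (log (1 + t) - log (1 - t)) / t)
      ((2 * t - (1 + t ^ 2) * (log (1 + t) - log (1 - t))) / t ^ 2) t := by
    rintro t ⟨ht0, ht1⟩
    have hsq : 1 - t ^ 2 ≠ 0 := by nlinarith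
    refine ((((hasDerivAt_pow 2 t).const_sub 1).mul
      (hasDerivAt_log_one_add_sub_log_one_sub (by linarith) ht1)).div (hasDerivAt_id t)
      ht0.ne').congr_deriv ?_
    simp only [id, Pi.mul_apply]
    field_simp
    ring
  refine antitoneOn_of_hasDerivWithinAt_nonpos (convex_Ioo 0 1)
    (fun t ht => (hderiv t ht).continuousAt.continuousWithinAt)
    (fun t ht => (hderiv t (by simpa using ht)).hasDerivWithinAt) ?_
  rw [interior_Ioo]
  rintro t ⟨ht0, ht1⟩
  have hL := two_mul_le_log_one_add_sub_log_one_sub ht0.le ht1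
  apply div_nonpos_of_nonpos_of_nonneg _ (sq_nonneg t)
  nlinarith [mul_nonneg (sq_nonneg t) ht0.le]

noncomputable def binEntSqrtOneSub (x : ℝ) : ℝ := binEnt ((1 + √(1 - x)) / 2)

noncomputable def binEntSqrtOneSubDeriv (x : ℝ) : ℝ :=
  (log (1 + √(1 - x)) - log (1 - √(1 - x))) / (4 * log 2 * √(1 - x))

lemma continuous_binEntSqrtOneSub : Continuous binEntSqrtOneSub := by
  have hfun : binEnt = fun x => binEntropy x / log 2 := funext binEnt_eq_binEntropy_div
  unfold binEntSqrtOneSub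
  rw [hfun]
  fun_prop

lemma binEntSqrtOneSubDeriv_nonneg {x : ℝ} (hx0 : 0 < x) (hx1 : x < 1) :
    0 ≤ binEntSqrtOneSubDeriv x := by
  have hs1 : √(1 - x) < 1 := (sqrt_lt' one_pos).2 (by linarith)
  have hL := two_mul_le_log_one_add_sub_log_one_sub (sqrt_nonneg (1 - x)) hs1
  have hlog2 := log_pos one_lt_two
  exact div_nonneg (by linarith [sqrt_nonneg (1 - x)]) (by positivity)

lemma hasDerivAt_binEntSqrtOneSub {x : ℝ} (hx0 : 0 < x) (hx1 : x < 1) :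
    HasDerivAt binEntSqrtOneSub (binEntSqrtOneSubDeriv x) x := by
  have hs0 : 0 < √(1 - x) := sqrt_pos.2 (by linarith)
  have hs1 : √(1 - x) < 1 := (sqrt_lt' one_pos).2 (by linarith)
  have hp : HasDerivAt (fun x => (1 + √(1 - x)) / 2) (-1 / (2 * √(1 - x)) / 2) x :=
    ((((hasDerivAt_id x).const_sub 1).sqrt (sub_pos.2 hx1).ne').const_add 1).div_const 2
  have hfun : binEntSqrtOneSub = fun x => binEntropy ((1 + √(1 - x)) / 2) / log 2 :=
    funext fun x => binEnt_eq_binEntropy_div _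
  rw [hfun]
  refine (((hasDerivAt_binEntropy (by positivity) (by linarith)).comp x hp).div_const
    (log 2)).congr_deriv ?_
  have hcompl : 1 - (1 + √(1 - x)) / 2 = (1 - √(1 - x)) / 2 := by ring
  rw [binEntSqrtOneSubDeriv, hcompl, log_div (by linarith) two_ne_zero,
    log_div (by linarith) two_ne_zero]
  field_simp
  ring

lemma monotoneOn_mul_binEntSqrtOneSubDeriv :
    MonotoneOn (fun x => x * binEntSqrtOneSubDeriv x) (Ioo 0 1) := by
  have hsqrt : ∀ x ∈ Ioo (0 : ℝ) 1, √(1 - x) ∈ Ioo 0 1 := fun x ⟨hx0, hx1⟩ =>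
    ⟨sqrt_pos.2 (by linarith), (sqrt_lt' one_pos).2 (by linarith)⟩
  have hform : ∀ x ∈ Ioo (0 : ℝ) 1, x * binEntSqrtOneSubDeriv x =
      (1 - √(1 - x) ^ 2) * (log (1 + √(1 - x)) - log (1 - √(1 - x))) / √(1 - x)
        / (4 * log 2) := by
    intro x hx
    rw [sq_sqrt (by linarith [hx.2]), binEntSqrtOneSubDeriv]
    ring
  intro a ha b hb hab
  simp only [hform a ha, hform b hb]
  gcongr ?_ / _
  exact antitoneOn_one_sub_sq_mul_log_div (hsqrt b hb) (hsqrt a ha)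
    (sqrt_le_sqrt (by linarith))

theorem stmt_18 (q : ℝ) (hq0 : 0 ≤ q) (hq1 : q ≤ 1 / 2) :
    MonotoneOn (fun S : ℝ =>
        1 - binEnt ((1 + Real.sqrt ((S / 2) ^ 2 - 1)) / 2)
          + binEnt ((1 + Real.sqrt (1 - q * (1 - q) * (8 - S ^ 2))) / 2))
      (Set.Icc (2 : ℝ) (2 * Real.sqrt 2)) := by
  have hgap := monotoneOn_sub_comp_const_mul (b := 1) (c := 4 * (q * (1 - q)))
    continuous_binEntSqrtOneSub.continuousOn (fun x hx => hasDerivAt_binEntSqrtOneSub hx.1 hx.2)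
    (fun x hx => binEntSqrtOneSubDeriv_nonneg hx.1 hx.2) monotoneOn_mul_binEntSqrtOneSubDeriv
    (by nlinarith) (by nlinarith [sq_nonneg (2 * q - 1)])
  have hsqrt2 : √2 ^ 2 = 2 := sq_sqrt zero_le_two
  have hy_anti : AntitoneOn (fun S : ℝ => 2 - S ^ 2 / 4) (Icc 2 (2 * √2)) :=
    fun S hS T _ hST => by nlinarith [hS.1]
  have hy_maps : MapsTo (fun S : ℝ => 2 - S ^ 2 / 4) (Icc 2 (2 * √2)) (Icc 0 1) :=
    fun S ⟨h2, h8⟩ => ⟨by nlinarith [sqrt_nonneg 2], by nlinarith⟩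
  convert (hgap.neg.const_add 1).comp hy_anti hy_maps using 1
  funext S
  simp only [Function.comp, binEntSqrtOneSub]
  ring_nf
end
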